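/- arXiv:2510.18794 — 6 statements merged into one kernel-verified Lean document; each statement's English description precedes it below -/
import Mathlib

section
/- Let d be a squarefree positive integer, K = ℚ(√(-d)), O_K its ring of integers. Let x₁,…,xₙ ∈ O_K, x₀ ∈ O_K \ {0}, and y = 2·x₀·∏_{k=1}^n (3xₖ+1). If z ∈ O_K satisfies z + ∑_{k=1}^n xₖ/yᵏ ∈ ℚ, then z ∈ ℤ. -/
/-!
Fix an embedding `φ : K →+* ℂ`. Writing `w = u + v √-d` with `u, v ∈ ℚ`, the complex number
`φ w` has rational real part and rational norm `u² + d v²`; for `w ∈ 𝓞 K` the trace `2u` and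
the norm are then rational algebraic integers, hence integers. Consequently `‖φ w‖ ≥ 1` for
`w ≠ 0`, and `(Im φ w)² ≥ 3/4` unless `w ∈ ℚ`.

The first bound gives `‖φ y‖ ≥ 2` and `3 ‖φ xₖ‖ ≤ ‖φ y‖`, so `‖φ (∑ xₖ / yᵏ)‖ ≤ ∑ 2⁻ᵏ / 3 ≤ 2/3`.
Since `z + ∑ xₖ / yᵏ` is rational, `(Im φ z)² ≤ 4/9 < 3/4`, so `z` is a rational algebraic
integer.
-/

open NumberField Complex ComplexConjugate

theorem exists_int_eq_of_isIntegral_algebraMap {A : Type*} [Field A] [Algebra ℚ A] {q : ℚ}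
    (h : IsIntegral ℤ (algebraMap ℚ A q)) : ∃ m : ℤ, q = m := by
  obtain ⟨m, hm⟩ := IsIntegrallyClosed.isIntegral_iff.mp
    ((isIntegral_algebraMap_iff (algebraMap ℚ A).injective).mp h)
  exact ⟨m, by simpa using hm.symm⟩

theorem Int.three_le_four_mul_sub_sq {a b : ℤ} (h : 0 < 4 * b - a ^ 2) : 3 ≤ 4 * b - a ^ 2 := by
  obtain ⟨c, rfl | rfl⟩ := Int.even_or_odd' a <;> ring_nf at h ⊢ <;> omega

namespace Complex

variable {α : ℂ}

theorem exists_int_eq_two_mul_re_of_isIntegral (hα : IsIntegral ℤ α) (hre : ∃ r : ℚ, α.re = r) :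
    ∃ a : ℤ, 2 * α.re = a := by
  obtain ⟨r, hr⟩ := hre
  have htr : α + conj α = algebraMap ℚ ℂ (2 * r) := by rw [add_conj, hr]; push_cast; rfl
  obtain ⟨a, ha⟩ := exists_int_eq_of_isIntegral_algebraMap
    (htr ▸ hα.add (hα.map (starRingEnd ℂ).toIntAlgHom))
  exact ⟨a, by rw [hr]; exact_mod_cast ha⟩

theorem exists_int_eq_normSq_of_isIntegral (hα : IsIntegral ℤ α) (hns : ∃ r : ℚ, normSq α = r) :
    ∃ b : ℤ, normSq α = b := by
  obtain ⟨r, hr⟩ := hns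
  have hnorm : α * conj α = algebraMap ℚ ℂ r := by rw [mul_conj, hr]; rfl
  obtain ⟨b, hb⟩ := exists_int_eq_of_isIntegral_algebraMap
    (hnorm ▸ hα.mul (hα.map (starRingEnd ℂ).toIntAlgHom))
  exact ⟨b, by rw [hr]; exact_mod_cast hb⟩

theorem one_le_norm_of_isIntegral (hα : IsIntegral ℤ α) (hns : ∃ r : ℚ, normSq α = r)
    (h0 : α ≠ 0) : 1 ≤ ‖α‖ := by
  obtain ⟨b, hb⟩ := exists_int_eq_normSq_of_isIntegral hα hns
  have hpos : (0 : ℝ) < b := hb ▸ normSq_pos.mpr h0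
  have hb1 : (1 : ℝ) ≤ b := by exact_mod_cast (show (0 : ℤ) < b by exact_mod_cast hpos)
  rw [normSq_eq_norm_sq] at hb
  nlinarith [norm_nonneg α]

/-- `4 (Im α)² = 4 N - T²` for the integers `N = αᾱ`, `T = α + ᾱ`, and `T² ≡ 0, 1 (mod 4)`. -/
theorem three_le_four_mul_im_sq_of_isIntegral (hα : IsIntegral ℤ α) (hre : ∃ r : ℚ, α.re = r)
    (hns : ∃ r : ℚ, normSq α = r) (him : α.im ≠ 0) : 3 ≤ 4 * α.im ^ 2 := by
  obtain ⟨a, ha⟩ := exists_int_eq_two_mul_re_of_isIntegral hα hre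
  obtain ⟨b, hb⟩ := exists_int_eq_normSq_of_isIntegral hα hns
  have hdisc : ((4 * b - a ^ 2 : ℤ) : ℝ) = 4 * α.im ^ 2 := by
    push_cast
    rw [← ha, ← hb, normSq_apply]
    ring
  have hpos : (0 : ℤ) < 4 * b - a ^ 2 := by
    exact_mod_cast hdisc ▸ (by positivity : (0 : ℝ) < 4 * α.im ^ 2)
  rw [← hdisc]
  exact_mod_cast Int.three_le_four_mul_sub_sq hpos

theorem re_eq_zero_and_im_sq_of_sq_eq_neg {s : ℂ} {c : ℝ} (hc : 0 < c) (hs : s ^ 2 = -c) :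
    s.re = 0 ∧ s.im ^ 2 = c := by
  have hre := congrArg re hs
  have him := congrArg im hs
  simp only [sq, mul_re, mul_im, neg_re, neg_im, ofReal_re, ofReal_im, neg_zero] at hre him
  have hs_re : s.re = 0 := by
    rcases mul_eq_zero.mp (by linarith : s.re * s.im = 0) with h | h
    · exact h
    · nlinarith
  exact ⟨hs_re, by rw [hs_re] at hre; linarith⟩

end Complex

theorem norm_sum_div_pow_succ_le {𝕜 : Type*} [NormedField 𝕜] {n : ℕ} (a : Fin n → 𝕜) {b : 𝕜}
    (hb : 2 ≤ ‖b‖) (ha : ∀ k, 3 * ‖a k‖ ≤ ‖b‖) :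
    ‖∑ k, a k / b ^ ((k : ℕ) + 1)‖ ≤ 2 / 3 := by
  have hterm (k : Fin n) : ‖a k / b ^ ((k : ℕ) + 1)‖ ≤ 1 / 3 * (1 / 2) ^ (k : ℕ) := by
    have hb2 : 1 ≤ (‖b‖ / 2) ^ (k : ℕ) := one_le_pow₀ (by linarith)
    rw [norm_div, norm_pow, div_le_iff₀ (by positivity)]
    calc ‖a k‖ ≤ 1 / 3 * ‖b‖ * 1 := by linarith [ha k]
      _ ≤ 1 / 3 * ‖b‖ * (‖b‖ / 2) ^ (k : ℕ) := by gcongr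
      _ = 1 / 3 * (1 / 2) ^ (k : ℕ) * ‖b‖ ^ ((k : ℕ) + 1) := by ring
  calc ‖∑ k, a k / b ^ ((k : ℕ) + 1)‖ ≤ ∑ k : Fin n, 1 / 3 * (1 / 2 : ℝ) ^ (k : ℕ) :=
        (norm_sum_le _ _).trans (Finset.sum_le_sum fun k _ => hterm k)
    _ = 1 / 3 * ∑ i ∈ Finset.range n, (1 / 2 : ℝ) ^ i := by
        rw [← Finset.mul_sum, Fin.sum_univ_eq_sum_range (fun i => (1 / 2 : ℝ) ^ i)]
    _ ≤ 2 / 3 := by linarith [sum_geometric_two_le n]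

section NormBounds

variable {R 𝕜 ι : Type*} [CommRing R] [RCLike 𝕜] [Fintype ι] {f : R →+* 𝕜}

theorem three_mul_norm_le_norm_three_mul_add_one_add_one (r : R) :
    3 * ‖f r‖ ≤ ‖f (3 * r + 1)‖ + 1 := by
  have h : f (3 * r + 1) - 1 = 3 * f r := by rw [map_add, map_mul, map_ofNat, map_one]; ring
  have := norm_sub_le (f (3 * r + 1)) 1
  rwa [h, norm_mul, RCLike.norm_ofNat, norm_one] at this

theorem one_le_norm_three_mul_add_one (hf : ∀ r, r ≠ 0 → 1 ≤ ‖f r‖) (r : R) :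
    1 ≤ ‖f (3 * r + 1)‖ := by
  by_cases hr : r = 0
  · simp [hr]
  · linarith [hf r hr, three_mul_norm_le_norm_three_mul_add_one_add_one (f := f) r]

theorem two_le_norm_two_mul_mul_prod (hf : ∀ r, r ≠ 0 → 1 ≤ ‖f r‖) (x : ι → R) {x₀ : R}
    (hx₀ : x₀ ≠ 0) : 2 ≤ ‖f (2 * x₀ * ∏ k, (3 * x k + 1))‖ := by
  have hprod : 1 ≤ ∏ k, ‖f (3 * x k + 1)‖ :=
    Finset.one_le_prod fun k _ => one_le_norm_three_mul_add_one hf (x k)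
  simp only [map_mul, map_prod, map_ofNat, norm_mul, norm_prod, RCLike.norm_ofNat]
  nlinarith [hf x₀ hx₀]

theorem three_mul_norm_le_norm_two_mul_mul_prod (hf : ∀ r, r ≠ 0 → 1 ≤ ‖f r‖) (x : ι → R)
    {x₀ : R} (hx₀ : x₀ ≠ 0) (k : ι) : 3 * ‖f (x k)‖ ≤ ‖f (2 * x₀ * ∏ k, (3 * x k + 1))‖ := by
  classical
  have hk : ‖f (3 * x k + 1)‖ ≤ ∏ j, ‖f (3 * x j + 1)‖ := by
    simpa using Finset.prod_le_prod_of_subset_of_one_le (Finset.subset_univ {k})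
      (fun j _ => norm_nonneg _) fun j _ _ => one_le_norm_three_mul_add_one hf (x j)
  have h1 := one_le_norm_three_mul_add_one hf (x k)
  simp only [map_mul, map_prod, map_ofNat, norm_mul, norm_prod, RCLike.norm_ofNat]
  nlinarith [hf x₀ hx₀, three_mul_norm_le_norm_three_mul_add_one_add_one (f := f) (x k)]

end NormBounds

theorem exists_eq_algebraMap_add_algebraMap_mul {F A : Type*} [Field F] [Ring A] [Algebra F A]
    (h : Module.finrank F A = 2) {s : A} (hs : s ∉ Set.range (algebraMap F A)) (w : A) :
    ∃ u v : F, w = algebraMap F A u + algebraMap F A v * s := by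
  have : Nontrivial A := Module.nontrivial_of_finrank_pos (R := F) (by omega)
  have hli : LinearIndependent F ![s, 1] := linearIndependent_fin2.mpr
    ⟨by simp, fun a ha => hs ⟨a, by simpa [Algebra.algebraMap_eq_smul_one] using ha⟩⟩
  have hspan := hli.span_eq_top_of_card_eq_finrank (by simp [h])
  rw [Matrix.range_cons_cons_empty] at hspan
  obtain ⟨v, u, huv⟩ := Submodule.mem_span_pair.mp (hspan ▸ Submodule.mem_top : w ∈ _)
  exact ⟨u, v, by rw [← huv, Algebra.smul_def, Algebra.smul_def, mul_one, add_comm]⟩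

section ImaginaryQuadratic

variable {K : Type*} [Field K] {d : ℕ} {sqd : K}

theorem notMem_range_algebraMap_of_sq_eq_neg [CharZero K] (hd : 0 < d)
    (hsqd : sqd ^ 2 = -(d : K)) : sqd ∉ Set.range (algebraMap ℚ K) := by
  rintro ⟨r, rfl⟩
  have hr : r ^ 2 = -(d : ℚ) := (algebraMap ℚ K).injective (by simpa using hsqd)
  have : (0 : ℚ) < d := by exact_mod_cast hd
  nlinarith [sq_nonneg r]

variable [NumberField K]

theorem exists_rat_decomposition (hdeg : Module.finrank ℚ K = 2) (hd : 0 < d)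
    (hsqd : sqd ^ 2 = -(d : K)) (φ : K →+* ℂ) (w : K) :
    ∃ u v : ℚ, w = algebraMap ℚ K u + algebraMap ℚ K v * sqd ∧ (φ w).re = u ∧
      (φ w).im ^ 2 = v ^ 2 * d ∧ normSq (φ w) = u ^ 2 + v ^ 2 * d := by
  obtain ⟨u, v, huv⟩ :=
    exists_eq_algebraMap_add_algebraMap_mul hdeg (notMem_range_algebraMap_of_sq_eq_neg hd hsqd) w
  obtain ⟨hre, him⟩ : (φ sqd).re = 0 ∧ (φ sqd).im ^ 2 = d :=
    re_eq_zero_and_im_sq_of_sq_eq_neg (by exact_mod_cast hd) (by rw [← map_pow, hsqd]; simp)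
  have hφ : φ w = u + v * φ sqd := by simp [huv]
  have hφre : (φ w).re = u := by simp [hφ, hre]
  have hφim : (φ w).im = v * (φ sqd).im := by simp [hφ, hre]
  refine ⟨u, v, huv, hφre, by rw [hφim, mul_pow, him], ?_⟩
  rw [normSq_apply, hφre, hφim]
  linear_combination (v : ℝ) ^ 2 * him

theorem one_le_norm_apply_of_ne_zero (hdeg : Module.finrank ℚ K = 2) (hd : 0 < d)
    (hsqd : sqd ^ 2 = -(d : K)) (φ : K →+* ℂ) {w : 𝓞 K} (hw : w ≠ 0) : 1 ≤ ‖φ w‖ := by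
  obtain ⟨u, v, -, -, -, hns⟩ := exists_rat_decomposition hdeg hd hsqd φ w
  refine one_le_norm_of_isIntegral ((RingOfIntegers.isIntegral_coe w).map φ.toIntAlgHom)
    ⟨u ^ 2 + v ^ 2 * d, by rw [hns]; push_cast; ring⟩ ?_
  simpa using RingOfIntegers.coe_ne_zero_iff.mpr hw

theorem exists_int_eq_of_four_mul_im_sq_lt_three (hdeg : Module.finrank ℚ K = 2) (hd : 0 < d)
    (hsqd : sqd ^ 2 = -(d : K)) (φ : K →+* ℂ) {z : 𝓞 K} (h : 4 * (φ z).im ^ 2 < 3) :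
    ∃ m : ℤ, (z : K) = m := by
  obtain ⟨u, v, huv, hre, him, hns⟩ := exists_rat_decomposition hdeg hd hsqd φ z
  have hint : IsIntegral ℤ (z : K) := RingOfIntegers.isIntegral_coe z
  have him0 : (φ z).im = 0 := by
    by_contra hne
    exact h.not_ge <| three_le_four_mul_im_sq_of_isIntegral (hint.map φ.toIntAlgHom) ⟨u, hre⟩
      ⟨u ^ 2 + v ^ 2 * d, by rw [hns]; push_cast; ring⟩ hne
  have hv : v = 0 := by simpa [him0, hd.ne'] using him.symm
  rw [hv, map_zero, zero_mul, add_zero] at huv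
  obtain ⟨m, rfl⟩ := exists_int_eq_of_isIntegral_algebraMap (huv ▸ hint)
  exact ⟨m, by simp [huv]⟩

end ImaginaryQuadratic

theorem mem_int_of_add_sum_mem_rat_general (d : ℕ) (hdpos : 0 < d)
    (K : Type*) [Field K] [NumberField K] (hdeg : Module.finrank ℚ K = 2)
    (sqd : K) (hsqd : sqd ^ 2 = -(d : K))
    (n : ℕ) (x : Fin n → 𝓞 K) (x₀ : 𝓞 K) (hx₀ : x₀ ≠ 0)
    (y : 𝓞 K) (hy : y = 2 * x₀ * ∏ k, (3 * x k + 1))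
    (z : 𝓞 K)
    (hz : ∃ q : ℚ, (z : K) + ∑ k, (x k : K) / (y : K) ^ ((k : ℕ) + 1)
            = algebraMap ℚ K q) :
    ∃ m : ℤ, (z : K) = m := by
  obtain ⟨q, hq⟩ := hz
  obtain ⟨φ⟩ : Nonempty (K →+* ℂ) := inferInstance
  set S := ∑ k, (x k : K) / (y : K) ^ ((k : ℕ) + 1)
  let f := φ.comp (algebraMap (𝓞 K) K)
  have hf : ∀ w : 𝓞 K, w ≠ 0 → 1 ≤ ‖f w‖ :=
    fun _ => one_le_norm_apply_of_ne_zero hdeg hdpos hsqd φ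
  have hS : ‖φ S‖ ≤ 2 / 3 := by
    have := norm_sum_div_pow_succ_le (fun k => f (x k))
      (hy ▸ two_le_norm_two_mul_mul_prod hf x hx₀)
      (hy ▸ three_mul_norm_le_norm_two_mul_mul_prod hf x hx₀)
    simpa [S, f, map_sum] using this
  have him : (φ z).im = -(φ S).im := by
    have := congrArg (fun w => (φ w).im) hq
    simp only [map_add, add_im, eq_ratCast, map_ratCast, ratCast_im] at this
    linarith
  apply exists_int_eq_of_four_mul_im_sq_lt_three hdeg hdpos hsqd φ
  nlinarith [abs_le.mp ((abs_im_le_norm (φ S)).trans hS)]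

/-- Let `d` be a squarefree positive integer, `K = ℚ(√(-d))`, `𝓞 K` its ring of
integers. Let `x₁,…,xₙ ∈ 𝓞 K`, `x₀ ∈ 𝓞 K \ {0}`, and `y = 2·x₀·∏ (3xₖ+1)`.
If `z ∈ 𝓞 K` satisfies `z + ∑ xₖ/yᵏ ∈ ℚ`, then `z ∈ ℤ`. -/
theorem mem_int_of_add_sum_mem_rat (d : ℕ) (hd : Squarefree d) (hdpos : 0 < d)
    (K : Type*) [Field K] [NumberField K] (hdeg : Module.finrank ℚ K = 2)
    (sqd : K) (hsqd : sqd ^ 2 = -(d : K))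
    (n : ℕ) (x : Fin n → 𝓞 K) (x₀ : 𝓞 K) (hx₀ : x₀ ≠ 0)
    (y : 𝓞 K) (hy : y = 2 * x₀ * ∏ k, (3 * x k + 1))
    (z : 𝓞 K)
    (hz : ∃ q : ℚ, (z : K) + ∑ k, (x k : K) / (y : K) ^ ((k : ℕ) + 1)
            = algebraMap ℚ K q) :
    ∃ m : ℤ, (z : K) = m :=
  mem_int_of_add_sum_mem_rat_general d hdpos K hdeg sqd hsqd n x x₀ hx₀ y hy z hz
end

section
/- Let d be a squarefree positive integer, K = ℚ(√(-d)), O_K its ring of integers. Let x₁,…,xₙ ∈ O_K and set y = 2·∏_{k=1}^n (3xₖ+1). Then y + ∑_{k=1}^n xₖ/yᵏ ∈ ℚ if and only if x₁,…,xₙ ∈ ℤ. -/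
/-!
Fix an embedding `φ : K →+* ℂ`. For an algebraic integer `z` of `K`, `2 Re φ z` and `|φ z|²` are
rational integers, so `4 (Im φ z)² = 4 |φ z|² - (2 Re φ z)²` is an integer that is `0` or `3`
mod `4`; hence `z ∈ ℤ` as soon as `(Im φ z)² < 3/4`.

Unless all `xₖ` vanish, `|φ (3xₖ + 1)| ≥ max 1 |φ xₖ|` for every `k` and `≥ 2` for some `k`, so
`|φ y| ≥ 4` and `|φ xₖ| ≤ |φ y| / 2`. Then every tail `tailⱼ = ∑_{k ≥ j} xₖ / y^(k+1-j)` has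
modulus at most `4/5`. Since `y + tail₀` is rational, `Im φ y = -Im φ tail₀` is small, so `y ∈ ℤ`
and `tail₀` is rational. Inductively, if `tailⱼ` is rational then so is `y · tailⱼ = xⱼ + tailⱼ₊₁`,
whence `xⱼ ∈ ℤ` and `tailⱼ₊₁` is rational.
-/

open NumberField Complex ComplexConjugate

lemma mul_sum_div_pow_succ {F : Type*} [Field F] {n : ℕ} (x : Fin (n + 1) → F) {y : F}
    (hy : y ≠ 0) :
    y * ∑ k, x k / y ^ ((k : ℕ) + 1) = x 0 + ∑ k : Fin n, x k.succ / y ^ ((k : ℕ) + 1) := by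
  rw [Fin.sum_univ_succ, mul_add, Finset.mul_sum]
  congr 1
  · simp [mul_div_cancel₀ _ hy]
  · refine Finset.sum_congr rfl fun k _ => ?_
    rw [Fin.val_succ, pow_succ]
    field_simp

lemma norm_sum_div_pow_le {F : Type*} [NormedField F] {n : ℕ} (x : Fin n → F) {y : F} {A : ℝ}
    (hA : 0 ≤ A) (hy : 1 < ‖y‖) (hx : ∀ k, ‖x k‖ ≤ A) :
    ‖∑ k, x k / y ^ ((k : ℕ) + 1)‖ ≤ A / (‖y‖ - 1) := by
  induction n with
  | zero => simpa using div_nonneg hA (by linarith)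
  | succ n ih =>
    have hy0 : y ≠ 0 := norm_pos_iff.mp (by linarith)
    have htail := ih (fun k => x k.succ) fun k => hx k.succ
    rw [← mul_div_cancel_left₀ (∑ k, x k / y ^ ((k : ℕ) + 1)) hy0, mul_sum_div_pow_succ x hy0,
      norm_div, div_le_iff₀ (by linarith)]
    calc ‖x 0 + ∑ k : Fin n, x k.succ / y ^ ((k : ℕ) + 1)‖
        ≤ A + A / (‖y‖ - 1) := (norm_add_le _ _).trans (add_le_add (hx 0) htail)
      _ = A / (‖y‖ - 1) * ‖y‖ := by field_simp [show ‖y‖ - 1 ≠ 0 by linarith]; ring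

lemma exists_int_eq_of_isIntegral_ratCast {F : Type*} [Field F] [CharZero F] {q : ℚ}
    (h : IsIntegral ℤ (q : F)) : ∃ m : ℤ, q = m := by
  rw [← eq_ratCast (algebraMap ℚ F), isIntegral_algebraMap_iff (algebraMap ℚ F).injective,
    IsIntegrallyClosed.isIntegral_iff] at h
  obtain ⟨m, hm⟩ := h
  exact ⟨m, by simpa using hm.symm⟩

lemma norm_map_sum_div_pow_le_four_fifths {K : Type*} [Field K] (φ : K →+* ℂ) {n : ℕ}
    {x : Fin n → K} {y : K} (hy : 8 / 3 ≤ ‖φ y‖) (hxy : ∀ k, ‖φ (x k)‖ ≤ ‖φ y‖ / 2) :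
    ‖φ (∑ k, x k / y ^ ((k : ℕ) + 1))‖ ≤ 4 / 5 := by
  simp only [map_sum, map_div₀, map_pow]
  refine (norm_sum_div_pow_le _ (by positivity) (by linarith) hxy).trans ?_
  rw [div_div, div_le_iff₀ (by nlinarith)]
  linarith

namespace Complex

lemma max_two_norm_le_norm_three_mul_add_one {w : ℂ} (hw : 1 ≤ ‖w‖) :
    max 2 ‖w‖ ≤ ‖3 * w + 1‖ := by
  have h := norm_sub_norm_le (3 * w) (-1)
  rw [sub_neg_eq_add, norm_neg, norm_one, norm_mul, norm_ofNat] at h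
  exact max_le (by linarith) (by linarith)

lemma re_eq_zero_and_im_sq_of_sq_eq_neg_s5 {w : ℂ} {r : ℝ} (hr : 0 < r)
    (h : w ^ 2 = -(r : ℂ)) : w.re = 0 ∧ w.im ^ 2 = r := by
  have hre := congrArg Complex.re h
  have him := congrArg Complex.im h
  simp only [sq, mul_re, mul_im, neg_re, neg_im, ofReal_re, ofReal_im] at hre him
  rcases mul_eq_zero.mp (show w.re * w.im = 0 by linarith) with h0 | h0
  · exact ⟨h0, by nlinarith⟩
  · nlinarith [sq_nonneg w.re]

lemma im_eq_zero_or_three_quarters_le_im_sq {w : ℂ} {T M : ℤ} (hT : 2 * w.re = T)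
    (hM : normSq w = M) : w.im = 0 ∨ 3 / 4 ≤ w.im ^ 2 := by
  have hJ : ((4 * M - T ^ 2 : ℤ) : ℝ) = 4 * w.im ^ 2 := by
    push_cast; rw [← hT, ← hM, normSq_apply]; ring
  have hT2 : T ^ 2 % 4 = 0 ∨ T ^ 2 % 4 = 1 := by
    rcases Int.even_or_odd' T with ⟨u, rfl | rfl⟩ <;> ring_nf <;> omega
  have hJ0 : 0 ≤ 4 * M - T ^ 2 := by exact_mod_cast hJ ▸ (by positivity : (0 : ℝ) ≤ 4 * w.im ^ 2)
  rcases (show 4 * M - T ^ 2 = 0 ∨ 3 ≤ 4 * M - T ^ 2 by omega) with h | h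
  · left; simpa [h] using hJ
  · right
    have : (3 : ℝ) ≤ ((4 * M - T ^ 2 : ℤ) : ℝ) := by exact_mod_cast h
    linarith

lemma exists_int_two_mul_re_and_normSq_of_isIntegral {w : ℂ} (hw : IsIntegral ℤ w) {a r : ℚ}
    (ha : w.re = a) (hr : normSq w = r) : ∃ T M : ℤ, 2 * w.re = T ∧ normSq w = M := by
  have htrace : w + conj w = ((2 * a : ℚ) : ℂ) := by
    rw [add_conj, ha]; push_cast; ring
  have hnorm : w * conj w = ((r : ℚ) : ℂ) := by
    rw [mul_conj, hr]; norm_cast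
  have hconj : IsIntegral ℤ (conj w) := hw.map (starRingEnd ℂ).toIntAlgHom
  obtain ⟨T, hT⟩ := exists_int_eq_of_isIntegral_ratCast (htrace ▸ hw.add hconj)
  obtain ⟨M, hM⟩ := exists_int_eq_of_isIntegral_ratCast (hnorm ▸ hw.mul hconj)
  exact ⟨T, M, by rw [ha]; exact_mod_cast hT, by rw [hr]; exact_mod_cast hM⟩

end Complex

section ImaginaryQuadratic

variable {K : Type*} [Field K] [CharZero K] {d : ℕ} {sqd : K}

lemma exists_rat_add_rat_mul_eq (hdeg : Module.finrank ℚ K = 2) (hd : 0 < d)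
    (hsqd : sqd ^ 2 = -(d : K)) (z : K) : ∃ a b : ℚ, (a : K) + b * sqd = z := by
  have hli : LinearIndependent ℚ ![(1 : K), sqd] := by
    refine (LinearIndependent.pair_iff' one_ne_zero).mpr fun a ha => ?_
    rw [Rat.smul_def, mul_one] at ha
    have : a ^ 2 = -(d : ℚ) := by exact_mod_cast ha ▸ hsqd
    nlinarith [sq_nonneg a, (Nat.cast_pos.mpr hd : (0 : ℚ) < d)]
  have hz : z ∈ Submodule.span ℚ (Set.range ![(1 : K), sqd]) := by
    rw [hli.span_eq_top_of_card_eq_finrank (by simp [hdeg])]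
    exact Submodule.mem_top
  rw [Matrix.range_cons, Matrix.range_cons, Matrix.range_empty, Set.union_empty,
    Set.singleton_union, Submodule.mem_span_pair] at hz
  simpa [Rat.smul_def] using hz

variable (φ : K →+* ℂ)

lemma exists_rat_re_im_sq (hdeg : Module.finrank ℚ K = 2) (hd : 0 < d)
    (hsqd : sqd ^ 2 = -(d : K)) (z : K) :
    ∃ a b : ℚ, (a : K) + b * sqd = z ∧ (φ z).re = a ∧ (φ z).im ^ 2 = b ^ 2 * d := by
  obtain ⟨a, b, rfl⟩ := exists_rat_add_rat_mul_eq hdeg hd hsqd z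
  obtain ⟨hre, him⟩ := re_eq_zero_and_im_sq_of_sq_eq_neg_s5 (w := φ sqd) (r := d)
    (by exact_mod_cast hd) (by rw [← map_pow, hsqd]; simp)
  refine ⟨a, b, rfl, ?_, ?_⟩ <;> simp [hre, mul_pow, him]

lemma exists_int_two_mul_re_and_normSq_map (hdeg : Module.finrank ℚ K = 2) (hd : 0 < d)
    (hsqd : sqd ^ 2 = -(d : K)) {z : K} (hz : IsIntegral ℤ z) :
    ∃ T M : ℤ, 2 * (φ z).re = T ∧ normSq (φ z) = M := by
  obtain ⟨a, b, -, hre, him⟩ := exists_rat_re_im_sq φ hdeg hd hsqd z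
  refine exists_int_two_mul_re_and_normSq_of_isIntegral (hz.map φ.toIntAlgHom) hre
    (r := a ^ 2 + b ^ 2 * d) ?_
  rw [normSq_apply, ← sq, ← sq, hre, him]; push_cast; ring

lemma exists_int_eq_of_im_map_sq_lt (hdeg : Module.finrank ℚ K = 2) (hd : 0 < d)
    (hsqd : sqd ^ 2 = -(d : K)) {z : K} (hz : IsIntegral ℤ z) (him : (φ z).im ^ 2 < 3 / 4) :
    ∃ m : ℤ, z = m := by
  obtain ⟨T, M, hT, hM⟩ := exists_int_two_mul_re_and_normSq_map φ hdeg hd hsqd hz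
  have him0 : (φ z).im = 0 :=
    (im_eq_zero_or_three_quarters_le_im_sq hT hM).resolve_right (by linarith)
  obtain ⟨a, b, rfl, -, hb⟩ := exists_rat_re_im_sq φ hdeg hd hsqd z
  have hb0 : b = 0 := by
    rw [him0, eq_comm] at hb
    simpa [hd.ne'] using hb
  subst hb0
  obtain ⟨m, rfl⟩ := exists_int_eq_of_isIntegral_ratCast (F := K)
    (by simpa only [Rat.cast_zero, zero_mul, add_zero] using hz)
  exact ⟨m, by simp⟩

lemma one_le_norm_map (hdeg : Module.finrank ℚ K = 2) (hd : 0 < d)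
    (hsqd : sqd ^ 2 = -(d : K)) {z : K} (hz : IsIntegral ℤ z) (hz0 : z ≠ 0) : 1 ≤ ‖φ z‖ := by
  obtain ⟨-, M, -, hM⟩ := exists_int_two_mul_re_and_normSq_map φ hdeg hd hsqd hz
  have hM0 : (0 : ℝ) < M := hM ▸ normSq_pos.mpr ((map_ne_zero φ).mpr hz0)
  have hM1 : (1 : ℝ) ≤ M := by exact_mod_cast (show (0 : ℤ) < M by exact_mod_cast hM0)
  rw [← one_le_sq_iff₀ (norm_nonneg _), Complex.sq_norm, hM]
  exact hM1

lemma max_two_norm_map_le_norm_map_three_mul_add_one (hdeg : Module.finrank ℚ K = 2)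
    (hd : 0 < d) (hsqd : sqd ^ 2 = -(d : K)) {z : K} (hz : IsIntegral ℤ z) (hz0 : z ≠ 0) :
    max 2 ‖φ z‖ ≤ ‖φ (3 * z + 1)‖ := by
  rw [map_add, map_mul, map_ofNat, map_one]
  exact max_two_norm_le_norm_three_mul_add_one (one_le_norm_map φ hdeg hd hsqd hz hz0)

lemma max_one_norm_map_le_norm_map_three_mul_add_one (hdeg : Module.finrank ℚ K = 2)
    (hd : 0 < d) (hsqd : sqd ^ 2 = -(d : K)) {z : K} (hz : IsIntegral ℤ z) :
    max 1 ‖φ z‖ ≤ ‖φ (3 * z + 1)‖ := by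
  rcases eq_or_ne z 0 with rfl | hz0
  · simp
  exact (max_le_max_right _ one_le_two).trans
    (max_two_norm_map_le_norm_map_three_mul_add_one φ hdeg hd hsqd hz hz0)

lemma norm_map_three_mul_add_one_le_norm_map_prod (hdeg : Module.finrank ℚ K = 2) (hd : 0 < d)
    (hsqd : sqd ^ 2 = -(d : K)) {ι : Type*} [Fintype ι] {x : ι → K}
    (hx : ∀ k, IsIntegral ℤ (x k)) (k : ι) :
    ‖φ (3 * x k + 1)‖ ≤ ‖φ (∏ j, (3 * x j + 1))‖ := by
  rw [map_prod, norm_prod]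
  exact Multiset.mem_le_prod_of_one_le
    (fun j => (le_max_left _ _).trans
      (max_one_norm_map_le_norm_map_three_mul_add_one φ hdeg hd hsqd (hx j)))
    (Finset.mem_univ k)

lemma exists_int_eq_of_add_mem_fieldRange (hdeg : Module.finrank ℚ K = 2) (hd : 0 < d)
    (hsqd : sqd ^ 2 = -(d : K)) {z w : K} (hz : IsIntegral ℤ z) (hw : ‖φ w‖ ≤ 4 / 5)
    (hzw : z + w ∈ (algebraMap ℚ K).fieldRange) : ∃ m : ℤ, z = m := by
  obtain ⟨q, hq⟩ := hzw
  have him : (φ z).im = -(φ w).im := by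
    have := congrArg (fun t => (φ t).im) hq
    simp only [eq_ratCast, map_ratCast, ratCast_im, map_add, add_im] at this
    linarith
  refine exists_int_eq_of_im_map_sq_lt φ hdeg hd hsqd hz ?_
  have := abs_im_le_norm (φ w)
  rw [him, neg_sq, ← sq_abs]
  nlinarith [abs_nonneg (φ w).im]

lemma forall_exists_int_eq_of_sum_div_pow_mem_fieldRange (hdeg : Module.finrank ℚ K = 2)
    (hd : 0 < d) (hsqd : sqd ^ 2 = -(d : K)) {y : K} (hyQ : y ∈ (algebraMap ℚ K).fieldRange)
    (hy : 8 / 3 ≤ ‖φ y‖) {n : ℕ} (x : Fin n → K) (hx : ∀ k, IsIntegral ℤ (x k))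
    (hxy : ∀ k, ‖φ (x k)‖ ≤ ‖φ y‖ / 2)
    (hsum : ∑ k, x k / y ^ ((k : ℕ) + 1) ∈ (algebraMap ℚ K).fieldRange) :
    ∀ k, ∃ m : ℤ, x k = m := by
  induction n with
  | zero => exact fun k => k.elim0
  | succ n ih =>
    have hy0 : y ≠ 0 := (map_ne_zero φ).mp (norm_pos_iff.mp (by linarith))
    have hhead : x 0 + ∑ k : Fin n, x k.succ / y ^ ((k : ℕ) + 1) ∈ (algebraMap ℚ K).fieldRange :=
      mul_sum_div_pow_succ x hy0 ▸ mul_mem hyQ hsum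
    obtain ⟨m, hm⟩ := exists_int_eq_of_add_mem_fieldRange φ hdeg hd hsqd (hx 0)
      (norm_map_sum_div_pow_le_four_fifths φ hy fun k => hxy k.succ) hhead
    have htail := sub_mem hhead (show x 0 ∈ (algebraMap ℚ K).fieldRange from ⟨m, by simp [hm]⟩)
    rw [add_sub_cancel_left] at htail
    exact Fin.cases ⟨m, hm⟩ (ih _ (fun k => hx k.succ) (fun k => hxy k.succ) htail)

lemma forall_exists_int_eq_of_add_sum_div_pow_mem_fieldRange (hdeg : Module.finrank ℚ K = 2)
    (hd : 0 < d) (hsqd : sqd ^ 2 = -(d : K)) {y : K} (hy : IsIntegral ℤ y) (hy' : 8 / 3 ≤ ‖φ y‖)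
    {n : ℕ} (x : Fin n → K) (hx : ∀ k, IsIntegral ℤ (x k)) (hxy : ∀ k, ‖φ (x k)‖ ≤ ‖φ y‖ / 2)
    (h : y + ∑ k, x k / y ^ ((k : ℕ) + 1) ∈ (algebraMap ℚ K).fieldRange) :
    ∀ k, ∃ m : ℤ, x k = m := by
  obtain ⟨m, hm⟩ := exists_int_eq_of_add_mem_fieldRange φ hdeg hd hsqd hy
    (norm_map_sum_div_pow_le_four_fifths φ hy' hxy) h
  have hyQ : y ∈ (algebraMap ℚ K).fieldRange := ⟨m, by simp [hm]⟩
  refine forall_exists_int_eq_of_sum_div_pow_mem_fieldRange φ hdeg hd hsqd hyQ hy' x hx hxy ?_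
  simpa using sub_mem h hyQ

end ImaginaryQuadratic

theorem add_sum_mem_rat_iff_general (d : ℕ) (hdpos : 0 < d)
    (K : Type*) [Field K] [NumberField K] (hdeg : Module.finrank ℚ K = 2)
    (sqd : K) (hsqd : sqd ^ 2 = -(d : K))
    (n : ℕ) (x : Fin n → 𝓞 K)
    (y : 𝓞 K) (hy : y = 2 * ∏ k, (3 * x k + 1)) :
    (∃ q : ℚ, (y : K) + ∑ k, (x k : K) / (y : K) ^ ((k : ℕ) + 1)
        = algebraMap ℚ K q) ↔ ∀ k, ∃ m : ℤ, (x k : K) = m := by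
  have hyK : (y : K) = 2 * ∏ k, (3 * (x k : K) + 1) := by
    simp only [hy, RingOfIntegers.coe_eq_algebraMap, map_mul, map_prod, map_add, map_ofNat,
      map_one]
  have hint (z : 𝓞 K) : IsIntegral ℤ (z : K) := z.isIntegral_coe
  simp only [eq_comm (b := algebraMap ℚ K _), ← RingHom.mem_fieldRange]
  refine ⟨fun hq => ?_, fun hx => ?_⟩
  · by_cases hx0 : ∀ k, (x k : K) = 0
    · exact fun k => ⟨0, by simp [hx0 k]⟩
    obtain ⟨j, hj⟩ := not_forall.mp hx0
    obtain ⟨φ⟩ : Nonempty (K →+* ℂ) := inferInstance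
    have hyφ : ‖φ y‖ = 2 * ‖φ (∏ k, (3 * (x k : K) + 1))‖ := by
      rw [hyK, map_mul, norm_mul, map_ofNat, Complex.norm_ofNat]
    have hle := norm_map_three_mul_add_one_le_norm_map_prod φ hdeg hdpos hsqd fun k => hint (x k)
    have hxy k : ‖φ (x k)‖ ≤ ‖φ y‖ / 2 := by
      linarith [hle k, (le_max_right _ _).trans
        (max_one_norm_map_le_norm_map_three_mul_add_one φ hdeg hdpos hsqd (hint (x k)))]
    have hy4 : 4 ≤ ‖φ y‖ := by
      linarith [hle j, (le_max_left _ _).trans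
        (max_two_norm_map_le_norm_map_three_mul_add_one φ hdeg hdpos hsqd (hint (x j)) hj)]
    exact forall_exists_int_eq_of_add_sum_div_pow_mem_fieldRange φ hdeg hdpos hsqd (hint y)
      (by linarith) _ (fun k => hint (x k)) hxy hq
  · choose m hm using hx
    have hxQ k : (x k : K) ∈ (algebraMap ℚ K).fieldRange := ⟨m k, by simp [hm k]⟩
    have hyQ : (y : K) ∈ (algebraMap ℚ K).fieldRange := hyK ▸ mul_mem (ofNat_mem _ 2)
      (prod_mem fun k _ => add_mem (mul_mem (ofNat_mem _ 3) (hxQ k)) (one_mem _))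
    exact add_mem hyQ (sum_mem fun k _ => div_mem (hxQ k) (pow_mem hyQ _))

/-- Let `d` be a squarefree positive integer, `K = ℚ(√(-d))`, `𝓞 K` its ring of
integers. Let `x₁,…,xₙ ∈ 𝓞 K` and set `y = 2·∏ (3xₖ+1)`. Then
`y + ∑ xₖ/yᵏ ∈ ℚ` if and only if all `xₖ ∈ ℤ`. -/
theorem add_sum_mem_rat_iff (d : ℕ) (hd : Squarefree d) (hdpos : 0 < d)
    (K : Type*) [Field K] [NumberField K] (hdeg : Module.finrank ℚ K = 2)
    (sqd : K) (hsqd : sqd ^ 2 = -(d : K))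
    (n : ℕ) (x : Fin n → 𝓞 K)
    (y : 𝓞 K) (hy : y = 2 * ∏ k, (3 * x k + 1)) :
    (∃ q : ℚ, (y : K) + ∑ k, (x k : K) / (y : K) ^ ((k : ℕ) + 1)
        = algebraMap ℚ K q) ↔ ∀ k, ∃ m : ℤ, (x k : K) = m :=
  add_sum_mem_rat_iff_general d hdpos K hdeg sqd hsqd n x y hy
end

section
/- Let x₁,…,xₙ ∈ ℤ[i] and y = 2·∏_{k=1}^n (3xₖ+1). Then y + ∑_{k=1}^n xₖ/yᵏ ∈ ℚ if and only if x₁,…,xₙ are all rational integers. -/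
/-!
Write `Y` for `y` in `ℂ` and `S = ∑ xₖ / Y^(k+1)`. Each factor `3xₖ + 1` is a nonzero Gaussian
integer, hence of modulus at least `1`, so `|Y| ≥ 2` and `|xₖ| ≤ (|Y| + 2)/6 < |Y| - 1`; this makes
`|S| < 1`. If `Y + S` is real, then `|Im y| < 1`, so `y` is a rational integer `c`. Then `S` is a
base-`c` expansion whose digits have modulus below `|c| - 1`: since `c S = x₀ + S'` with `|S'| < 1`
is real, `Im x₀ = 0`, and the remaining digits follow by induction.
-/

open GaussianInt Finset

theorem sum_div_pow_succ_fin_succ {K : Type*} [Field K] {n : ℕ} (a : Fin (n + 1) → K) (z : K) :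
    ∑ k, a k / z ^ ((k : ℕ) + 1) = (a 0 + ∑ k : Fin n, a k.succ / z ^ ((k : ℕ) + 1)) / z := by
  simp only [Fin.sum_univ_succ, Fin.val_zero, Fin.val_succ, add_div, sum_div, pow_succ, div_div,
    pow_zero, one_mul]

section NormBounds

variable {𝕜 : Type*} [NormedField 𝕜] {n : ℕ} {a : Fin n → 𝕜} {z : 𝕜} {B : ℝ}

theorem norm_sum_div_pow_succ_le_s6 (hB₀ : 0 ≤ B) (hB : ∀ k, ‖a k‖ ≤ B) (hz : 1 < ‖z‖) :
    ‖∑ k, a k / z ^ ((k : ℕ) + 1)‖ ≤ B / (‖z‖ - 1) := by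
  induction n with
  | zero => simpa using div_nonneg hB₀ (by linarith)
  | succ n ih =>
    have hz₁ : 0 < ‖z‖ - 1 := by linarith
    rw [sum_div_pow_succ_fin_succ, norm_div, div_le_div_iff₀ (by linarith) hz₁]
    calc ‖a 0 + ∑ k : Fin n, a k.succ / z ^ ((k : ℕ) + 1)‖ * (‖z‖ - 1)
        ≤ (B + B / (‖z‖ - 1)) * (‖z‖ - 1) := by
          gcongr
          exact (norm_add_le _ _).trans (add_le_add (hB 0) (ih fun k => hB k.succ))
      _ = B * ‖z‖ := by field_simp; ring

theorem norm_sum_div_pow_succ_lt_one (hB₀ : 0 ≤ B) (hB : ∀ k, ‖a k‖ ≤ B) (hBz : B < ‖z‖ - 1) :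
    ‖∑ k, a k / z ^ ((k : ℕ) + 1)‖ < 1 :=
  (norm_sum_div_pow_succ_le_s6 hB₀ hB (by linarith)).trans_lt ((div_lt_one (by linarith)).mpr hBz)

end NormBounds

namespace GaussianInt

theorem im_eq_zero_of_im_add_eq_zero {z : GaussianInt} {w : ℂ} (hw : ‖w‖ < 1)
    (h : ((z : ℂ) + w).im = 0) : z.im = 0 := by
  have : |(z.im : ℝ)| < 1 := by
    rw [intCast_im, show (z : ℂ).im = -w.im by simp at h; linarith, abs_neg]
    exact (Complex.abs_im_le_norm w).trans_lt hw
  exact Int.abs_lt_one_iff.mp (by exact_mod_cast this)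

theorem im_eq_zero_of_im_sum_div_intCast_pow_eq_zero {n : ℕ} {c : ℤ} {x : Fin n → GaussianInt}
    {B : ℝ} (hB₀ : 0 ≤ B) (hB : ∀ k, ‖(x k : ℂ)‖ ≤ B) (hBc : B < |(c : ℝ)| - 1)
    (h : (∑ k, (x k : ℂ) / (c : ℂ) ^ ((k : ℕ) + 1)).im = 0) (k : Fin n) : (x k).im = 0 := by
  induction n with
  | zero => exact k.elim0
  | succ n ih =>
    rw [← Complex.norm_intCast] at hBc
    have hc : (c : ℝ) ≠ 0 := by rintro hc; simp [hc] at hBc; linarith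
    rw [sum_div_pow_succ_fin_succ, Complex.div_intCast_im, div_eq_zero_iff, or_iff_left hc] at h
    have h₀ : (x 0).im = 0 :=
      im_eq_zero_of_im_add_eq_zero (norm_sum_div_pow_succ_lt_one hB₀ (fun k => hB k.succ) hBc) h
    refine Fin.cases h₀ (ih (x := fun k => x k.succ) (fun k => hB k.succ) ?_) k
    simpa [← intCast_im, h₀] using h

theorem one_le_norm_toComplex {z : GaussianInt} (hz : z ≠ 0) : 1 ≤ ‖(z : ℂ)‖ := by
  have h : (1 : ℝ) ≤ ‖(z : ℂ)‖ ^ 2 := by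
    rw [Complex.sq_norm, ← intCast_real_norm]
    exact_mod_cast norm_pos.mpr hz
  nlinarith [_root_.norm_nonneg (z : ℂ)]

theorem norm_toComplex_le_prod {ι : Type*} [Fintype ι] {f : ι → GaussianInt}
    (hf : ∀ i, f i ≠ 0) (k : ι) : ‖(f k : ℂ)‖ ≤ ‖((∏ i, f i : GaussianInt) : ℂ)‖ := by
  classical
  rw [map_prod, norm_prod, ← mul_prod_erase _ _ (mem_univ k)]
  exact le_mul_of_one_le_right (_root_.norm_nonneg _)
    (one_le_prod fun i _ => one_le_norm_toComplex (hf i))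

theorem three_mul_add_one_ne_zero (x : GaussianInt) : 3 * x + 1 ≠ 0 := by
  intro h
  have := congrArg Zsqrtd.re h
  simp at this
  omega

section ProductBounds

variable {ι : Type*} [Fintype ι] {x : ι → GaussianInt} {y : GaussianInt}

theorem two_le_norm_of_eq_two_mul_prod (hy : y = 2 * ∏ k, (3 * x k + 1)) : 2 ≤ ‖(y : ℂ)‖ := by
  have : 1 ≤ ‖((∏ k, (3 * x k + 1) : GaussianInt) : ℂ)‖ :=
    one_le_norm_toComplex (prod_ne_zero_iff.mpr fun k _ => three_mul_add_one_ne_zero (x k))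
  rw [hy, map_mul, norm_mul, map_ofNat, Complex.norm_ofNat]
  linarith

theorem six_mul_norm_le_of_eq_two_mul_prod (hy : y = 2 * ∏ k, (3 * x k + 1)) (k : ι) :
    6 * ‖(x k : ℂ)‖ ≤ ‖(y : ℂ)‖ + 2 := by
  have hfactor := norm_toComplex_le_prod (fun k => three_mul_add_one_ne_zero (x k)) k
  have htriangle : 3 * ‖(x k : ℂ)‖ ≤ ‖((3 * x k + 1 : GaussianInt) : ℂ)‖ + 1 := by
    rw [map_add, map_mul, map_ofNat, map_one]
    simpa using norm_le_norm_add_norm_sub' (3 * (x k : ℂ)) (3 * (x k : ℂ) + 1)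
  rw [hy, map_mul, norm_mul, map_ofNat, Complex.norm_ofNat]
  linarith

end ProductBounds

end GaussianInt

/-- Let `x₁,…,xₙ ∈ ℤ[i]` and `y = 2·∏ (3xₖ+1)`. Then `y + ∑ xₖ/yᵏ ∈ ℚ` (inside
`ℚ(i) ⊆ ℂ`) if and only if `x₁,…,xₙ` are all rational integers. -/
theorem gaussian_add_sum_mem_rat_iff (n : ℕ) (x : Fin n → GaussianInt)
    (y : GaussianInt) (hy : y = 2 * ∏ k, (3 * x k + 1)) :
    (∃ q : ℚ, GaussianInt.toComplex y
        + ∑ k, GaussianInt.toComplex (x k) / (GaussianInt.toComplex y) ^ ((k : ℕ) + 1)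
        = (q : ℂ)) ↔ ∀ k, ∃ m : ℤ, x k = (m : GaussianInt) := by
  constructor
  · rintro ⟨q, hq⟩
    set R := ‖(y : ℂ)‖ with hR
    have hR₂ : 2 ≤ R := two_le_norm_of_eq_two_mul_prod hy
    have hB₀ : 0 ≤ (R + 2) / 6 := by positivity
    have hx : ∀ k, ‖(x k : ℂ)‖ ≤ (R + 2) / 6 := fun k => by
      linarith [six_mul_norm_le_of_eq_two_mul_prod hy k]
    have hBR : (R + 2) / 6 < R - 1 := by linarith
    have hyim : y.im = 0 :=
      im_eq_zero_of_im_add_eq_zero (norm_sum_div_pow_succ_lt_one hB₀ hx hBR) (by rw [hq]; simp)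
    have hyre : (y : ℂ) = (y.re : ℂ) := by simp [toComplex_def, hyim]
    rw [hyre] at hq
    rw [hR, hyre, Complex.norm_intCast] at hB₀ hx hBR
    intro k
    refine ⟨(x k).re, Zsqrtd.ext (by simp) ?_⟩
    simpa using im_eq_zero_of_im_sum_div_intCast_pow_eq_zero hB₀ hx hBR
      (by simpa using congrArg Complex.im hq) k
  · intro h
    choose m hm using h
    have hym : y = ((2 * ∏ k, (3 * m k + 1) : ℤ) : GaussianInt) := by simp [hy, hm]
    refine ⟨2 * ∏ k, (3 * m k + 1) + ∑ k, (m k : ℚ) / (2 * ∏ k, (3 * m k + 1)) ^ ((k : ℕ) + 1), ?_⟩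
    simp [hym, hm, map_ofNat]
end

section
/- Let K be a number field with ring of integers O_K, and let A₁, A₂, S, T ∈ O_K with A₁ ≠ A₂ and S ≠ 0. Define f(A₁,A₂,S,T,m) = (T−mS)⁴ − 2(A₁+A₂)S²(T−mS)² + (A₁−A₂)²S⁴. Then A₁ and A₂ are both squares in O_K and S divides T in O_K if and only if there exists m ∈ O_K with f(A₁,A₂,S,T,m) = 0. -/
open NumberField Polynomial

/-- Relation-combining theorem over a number field: let `A₁, A₂, S, T ∈ 𝓞 K`
with `A₁ ≠ A₂` and `S ≠ 0`. Then `A₁` and `A₂` are both squares in `𝓞 K` and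
`S ∣ T` if and only if for some `m ∈ 𝓞 K` we have
`(T−mS)⁴ − 2(A₁+A₂)S²(T−mS)² + (A₁−A₂)²S⁴ = 0`. -/
theorem relation_combining (K : Type*) [Field K] [NumberField K]
    (A₁ A₂ S T : 𝓞 K) (hA : A₁ ≠ A₂) (hS : S ≠ 0) :
    ((∃ a : 𝓞 K, A₁ = a ^ 2) ∧ (∃ a : 𝓞 K, A₂ = a ^ 2) ∧ S ∣ T) ↔
      ∃ m : 𝓞 K, (T - m * S) ^ 4 - 2 * (A₁ + A₂) * S ^ 2 * (T - m * S) ^ 2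
        + (A₁ - A₂) ^ 2 * S ^ 4 = 0 := by
  have hf : Function.Injective (algebraMap (𝓞 K) K) := IsFractionRing.injective (𝓞 K) K
  constructor
  · rintro ⟨⟨a, rfl⟩, ⟨b, rfl⟩, ⟨u, rfl⟩⟩
    exact ⟨u - (a + b), by ring⟩
  · rintro ⟨m, hm⟩
    set f := algebraMap (𝓞 K) K with hfdef
    have hSK : f S ≠ 0 := fun h => hS (hf (by simpa using h))
    obtain ⟨x, hxs⟩ : ∃ x : K, x * f S = f T - f m * f S :=
      ⟨(f T - f m * f S) / f S, div_mul_cancel₀ _ hSK⟩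
    have hmK : (f T - f m * f S) ^ 4 - 2 * (f A₁ + f A₂) * (f S) ^ 2 * (f T - f m * f S) ^ 2
        + (f A₁ - f A₂) ^ 2 * (f S) ^ 4 = 0 := by
      have := congrArg f hm
      simpa only [map_sub, map_add, map_mul, map_pow, map_zero, map_ofNat] using this
    have key : (x ^ 4 - 2 * (f A₁ + f A₂) * x ^ 2 + (f A₁ - f A₂) ^ 2) * (f S) ^ 4 = 0 := by
      linear_combination hmK + (x ^ 3 * (f S) ^ 3
        + x ^ 2 * (f S) ^ 2 * (f T - f m * f S) + x * f S * (f T - f m * f S) ^ 2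
        + (f T - f m * f S) ^ 3
        - 2 * (f A₁ + f A₂) * (f S) ^ 2 * (x * f S + (f T - f m * f S))) * hxs
    have hxeq : x ^ 4 - 2 * (f A₁ + f A₂) * x ^ 2 + (f A₁ - f A₂) ^ 2 = 0 :=
      (mul_eq_zero.mp key).resolve_right (pow_ne_zero 4 hSK)
    have hx2int : IsIntegral (𝓞 K) (x ^ 2) := by
      refine ⟨X ^ (1 + 1) + (C (-(2 * (A₁ + A₂))) * X + C ((A₁ - A₂) ^ 2)),
        monic_X_pow_add (degree_linear_le.trans_lt (by norm_num)), ?_⟩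
      simp only [eval₂_add, eval₂_pow, eval₂_X, eval₂_mul, eval₂_C]
      simp only [map_neg, map_mul, map_add, map_sub, map_pow, map_ofNat]
      linear_combination hxeq
    have hxint : IsIntegral (𝓞 K) x := hx2int.of_pow (by norm_num)
    obtain ⟨ξ, hξ⟩ := IsIntegrallyClosed.isIntegral_iff.mp hxint
    have hxne : x ≠ 0 := by
      intro h
      apply hA; apply hf
      have h2 : (f A₁ - f A₂) ^ 2 = 0 := by rw [h] at hxeq; linear_combination hxeq
      exact sub_eq_zero.mp ((pow_eq_zero_iff (by norm_num : 2 ≠ 0)).mp h2)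
    have mk : ∀ (B : 𝓞 K) (c : K), c ^ 2 = f B → ∃ a : 𝓞 K, B = a ^ 2 := by
      intro B c hc
      have hint : IsIntegral (𝓞 K) c :=
        ⟨X ^ 2 - C B, monic_X_pow_sub_C B two_ne_zero, by
          simp only [eval₂_sub, eval₂_pow, eval₂_X, eval₂_C]
          rw [hc]; ring⟩
      obtain ⟨a, ha⟩ := IsIntegrallyClosed.isIntegral_iff.mp hint
      exact ⟨a, hf (by rw [map_pow, ha, hc])⟩
    have ha1 : ((x ^ 2 + f A₁ - f A₂) / (2 * x)) ^ 2 = f A₁ := by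
      field_simp
      linear_combination hxeq
    have ha2 : ((x ^ 2 - f A₁ + f A₂) / (2 * x)) ^ 2 = f A₂ := by
      field_simp
      linear_combination hxeq
    refine ⟨mk A₁ _ ha1, mk A₂ _ ha2, ⟨m + ξ, hf ?_⟩⟩
    rw [map_mul, map_add, hξ]
    linear_combination -hxs
end

section
/- Let K be a number field with ring of integers O_K, and let x ∈ K satisfy (x² + A₁ − A₂)² = 4A₁x² for some A₁, A₂ ∈ O_K with A₁ ≠ A₂. Then x ∈ O_K, x ≠ 0, y := (A₁−A₂)/x ∈ O_K, (x+y)/2 ∈ O_K, A₁ = ((x+y)/2)², and A₂ = ((x+y)/2 − y)². In particular A₁ and A₂ are squares in O_K. -/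
open NumberField

/-!
Put `D = A₁ - A₂`; then `x ≠ 0`, and for `w = (x + D/x)/2`, `v = w - D/x = (x - D/x)/2` one has
`w² - A₁ = v² - A₂ = ((x² + D)² - 4A₁x²)/(4x²) = 0`. Square roots of algebraic integers are
algebraic integers, so `w, v ∈ 𝓞 K`, and hence so are `x = w + v` and `D/x = w - v`.
-/

section SquareRoots

variable {K : Type*} [Field K]

theorem ne_zero_of_sq_add_sub_sq_eq {a b x : K} (hab : a ≠ b)
    (hx : (x ^ 2 + a - b) ^ 2 = 4 * a * x ^ 2) : x ≠ 0 := by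
  rintro rfl
  exact hab (sub_eq_zero.mp (pow_eq_zero_iff two_ne_zero |>.mp (by linear_combination hx)))

variable [NeZero (2 : K)] {a b x : K}

theorem sq_half_add_div_eq_of_sq_add_sub_sq_eq (hx0 : x ≠ 0)
    (hx : (x ^ 2 + a - b) ^ 2 = 4 * a * x ^ 2) : ((x + (a - b) / x) / 2) ^ 2 = a := by
  field_simp
  linear_combination hx

theorem sq_half_add_div_sub_div_eq_of_sq_add_sub_sq_eq (hx0 : x ≠ 0)
    (hx : (x ^ 2 + a - b) ^ 2 = 4 * a * x ^ 2) :
    ((x + (a - b) / x) / 2 - (a - b) / x) ^ 2 = b := by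
  field_simp
  linear_combination hx

end SquareRoots

theorem NumberField.RingOfIntegers.exists_coe_eq_of_sq_eq {K : Type*} [Field K] {w : K}
    {A : 𝓞 K} (hw : w ^ 2 = A) : ∃ W : 𝓞 K, (W : K) = w :=
  ⟨⟨w, IsIntegral.of_pow two_pos (hw ▸ A.isIntegral_coe)⟩, rfl⟩

/-- Reverse direction of the relation-combining lemma: let `K` be a number field
with ring of integers `𝓞 K`, and let `x ∈ K` satisfy `(x² + A₁ − A₂)² = 4A₁x²`
for some `A₁, A₂ ∈ 𝓞 K` with `A₁ ≠ A₂`. Then `x ∈ 𝓞 K`, `x ≠ 0`,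
`y := (A₁−A₂)/x ∈ 𝓞 K`, `(x+y)/2 ∈ 𝓞 K`, `A₁ = ((x+y)/2)²` and
`A₂ = ((x+y)/2 − y)²`; in particular `A₁` and `A₂` are squares in `𝓞 K`. -/
theorem relation_combining_reverse (K : Type*) [Field K] [NumberField K]
    (A₁ A₂ : 𝓞 K) (hA : A₁ ≠ A₂) (x : K)
    (hx : (x ^ 2 + (A₁ : K) - (A₂ : K)) ^ 2 = 4 * (A₁ : K) * x ^ 2) :
    (∃ x' : 𝓞 K, (x' : K) = x) ∧ x ≠ 0 ∧
    (∃ y' : 𝓞 K, (y' : K) = ((A₁ : K) - (A₂ : K)) / x) ∧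
    (∃ w : 𝓞 K, (w : K) = (x + ((A₁ : K) - (A₂ : K)) / x) / 2 ∧
      (A₁ : K) = (w : K) ^ 2 ∧
      (A₂ : K) = ((w : K) - ((A₁ : K) - (A₂ : K)) / x) ^ 2) ∧
    (∃ a : 𝓞 K, A₁ = a ^ 2) ∧ (∃ a : 𝓞 K, A₂ = a ^ 2) := by
  have hx0 : x ≠ 0 :=
    ne_zero_of_sq_add_sub_sq_eq (fun h ↦ hA (RingOfIntegers.ext h)) hx
  have hw := sq_half_add_div_eq_of_sq_add_sub_sq_eq hx0 hx
  have hv := sq_half_add_div_sub_div_eq_of_sq_add_sub_sq_eq hx0 hx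
  obtain ⟨W, hW⟩ := RingOfIntegers.exists_coe_eq_of_sq_eq hw
  obtain ⟨V, hV⟩ := RingOfIntegers.exists_coe_eq_of_sq_eq hv
  refine ⟨⟨W + V, ?_⟩, hx0, ⟨W - V, ?_⟩, ⟨W, hW, by rw [hW, hw], by rw [hW, hv]⟩,
    ⟨W, RingOfIntegers.ext ?_⟩, ⟨V, RingOfIntegers.ext ?_⟩⟩
  · push_cast [hW, hV]; ring
  · push_cast [hW, hV]; ring
  · push_cast [hW, hw]; rfl
  · push_cast [hV, hv]; rfl
end

section
/- An integer m ∈ ℤ is nonzero if and only if m = (2r+1)(3s+1) for some r, s ∈ ℤ. -/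
lemma aux_exists : ∀ n : ℕ, ∀ m : ℤ, m.natAbs = n → m ≠ 0 →
    ∃ r s : ℤ, m = (2 * r + 1) * (3 * s + 1) := by
  intro n
  induction n using Nat.strong_induction_on with
  | _ n ih =>
    intro m hn hm
    rcases Int.even_or_odd m with ⟨k, hk⟩ | ⟨k, hk⟩
    · have hk0 : k ≠ 0 := by omega
      have hlt : k.natAbs < n := by omega
      obtain ⟨r, s, hrs⟩ := ih k.natAbs hlt k rfl hk0
      exact ⟨-r - 1, -2 * s - 1, by rw [hk, hrs]; ring⟩
    · exact ⟨k, 0, by omega⟩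

/-- An integer `m` is nonzero if and only if `m = (2r+1)(3s+1)` for some `r, s ∈ ℤ`. -/
theorem int_ne_zero_iff (m : ℤ) :
    m ≠ 0 ↔ ∃ r s : ℤ, m = (2 * r + 1) * (3 * s + 1) := by
  constructor
  · exact aux_exists m.natAbs m rfl
  · rintro ⟨r, s, rfl⟩
    have h1 : (2 * r + 1) ≠ 0 := by omega
    have h2 : (3 * s + 1) ≠ 0 := by omega
    exact mul_ne_zero h1 h2
end
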